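/- arXiv:1505.07793 — 4 statements merged into one kernel-verified Lean document; each statement's English description precedes it below -/
import Mathlib

section
/- Let G be a topological group that is topologically finitely generated (i.e. there is a finite subset whose generated subgroup is dense). Then for every natural number r, the set of closed subgroups of G of index r is finite. -/
/-!
A subgroup `H` of index `r` is the stabilizer of a point for the action of `G` on
`G ⧸ H ≃ Fin r`; if `H` is closed, the kernel of that action, the normal core of `H`, is closed of
finite index, hence open. So `H` is determined by a homomorphism `G →* Perm (Fin r)`
with open kernel together with a point of `Fin r`. Two homomorphisms with open kernels agree on
an open subgroup, their equalizer; if they agree on a finite set `S` generating a dense subgroup,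
that open (hence closed) equalizer contains the closure of `⟨S⟩`, i.e. all of `G`. Hence there are
only finitely many such homomorphisms, bounded by the maps `S → Perm (Fin r)`.
-/

open MulAction

namespace Subgroup

variable {G : Type*} [Group G]

theorem exists_comap_stabilizer_eq (H : Subgroup G) [Finite (G ⧸ H)] :
    ∃ (φ : G →* Equiv.Perm (Fin (Nat.card (G ⧸ H)))) (i : Fin (Nat.card (G ⧸ H))),
      φ.ker = H.normalCore ∧ (stabilizer _ i).comap φ = H := by
  let e : G ⧸ H ≃ Fin (Nat.card (G ⧸ H)) := Finite.equivFin _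
  refine ⟨(e.permCongrHom : _ →* _).comp (toPermHom G (G ⧸ H)), e ((1 : G) : G ⧸ H), ?_, ?_⟩
  · rw [MonoidHom.ker_mulEquiv_comp, normalCore_eq_ker]
  · ext g
    simp [Equiv.permCongrHom_coe, QuotientGroup.eq]

variable [TopologicalSpace G] [SeparatelyContinuousMul G]

theorem eq_top_of_isOpen_of_dense_le {H D : Subgroup G} (hH : IsOpen (H : Set G))
    (hD : Dense (D : Set G)) (hDH : D ≤ H) : H = ⊤ := by
  have hcl : _root_.closure (D : Set G) ⊆ (H : Set G) :=
    (H.isClosed_of_isOpen hH).closure_subset_iff.mpr hDH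
  rw [hD.closure_eq] at hcl
  exact eq_top_iff.mpr fun g _ => hcl (Set.mem_univ g)

end Subgroup

theorem MonoidHom.finite_setOf_isOpen_ker {G M : Type*} [Group G] [TopologicalSpace G]
    [SeparatelyContinuousMul G] [Group M] [Finite M] {S : Set G} (hS_fin : S.Finite)
    (hS : Dense (Subgroup.closure S : Set G)) :
    {φ : G →* M | IsOpen (φ.ker : Set G)}.Finite := by
  have : Finite S := hS_fin
  refine Set.Finite.of_injOn (f := fun φ (s : S) => φ s) (Set.mapsTo_univ _ _) ?_ Set.finite_univ
  intro φ₁ h₁ φ₂ h₂ heq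
  have hopen : IsOpen (φ₁.eqLocus φ₂ : Set G) :=
    Subgroup.isOpen_mono (H₁ := φ₁.ker ⊓ φ₂.ker)
      (fun g hg => hg.1.trans hg.2.symm) (h₁.inter h₂)
  have hle : Subgroup.closure S ≤ φ₁.eqLocus φ₂ :=
    (Subgroup.closure_le _).mpr fun s hs => congrFun heq ⟨s, hs⟩
  have htop := Subgroup.eq_top_of_isOpen_of_dense_le hopen hS hle
  exact MonoidHom.ext fun g => htop.ge (Subgroup.mem_top g)

/-- A topologically finitely generated topological group has only finitely many
closed subgroups of any given finite index `r`. -/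
theorem closed_subgroups_of_index_finite
    {G : Type*} [Group G] [TopologicalSpace G] [IsTopologicalGroup G]
    (hfg : ∃ S : Finset G, Dense ((Subgroup.closure (S : Set G) : Subgroup G) : Set G))
    (r : ℕ) :
    {H : Subgroup G | IsClosed (H : Set G) ∧ Finite (G ⧸ H) ∧ Nat.card (G ⧸ H) = r}.Finite := by
  obtain ⟨S, hS⟩ := hfg
  have hΦ := MonoidHom.finite_setOf_isOpen_ker (M := Equiv.Perm (Fin r)) S.finite_toSet hS
  refine ((hΦ.prod (Set.finite_univ (α := Fin r))).image
    fun p => (stabilizer _ p.2).comap p.1).subset ?_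
  rintro H ⟨hH, hfin, rfl⟩
  obtain ⟨φ, i, hker, hφ⟩ := H.exists_comap_stabilizer_eq
  refine ⟨(φ, i), ⟨?_, Set.mem_univ _⟩, hφ⟩
  change IsOpen (φ.ker : Set G)
  rw [hker]
  have : H.FiniteIndex := Subgroup.finiteIndex_of_finite_quotient
  exact Subgroup.isOpen_of_isClosed_of_finiteIndex _ (Subgroup.normalCore_isClosed H hH)
end

section
/- Let G be a topological group, g ∈ G, and suppose there exists a compact open subgroup L ≤ G such that the sequence ([L : L ∩ gⁿLg⁻ⁿ])_{n∈ℕ} is bounded. Then for every compact open subgroup K ≤ G, the sequence ([K : K ∩ gⁿKg⁻ⁿ])_{n∈ℕ} is bounded; indeed [K : K ∩ gⁿKg⁻ⁿ] ≤ [L : L ∩ gⁿLg⁻ⁿ] · [K : K ∩ L] · [L : K ∩ L] for all n. -/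
/-!
Conjugation by `c` preserves relative indices, so `[cLc⁻¹ : cKc⁻¹ ∩ cLc⁻¹] = [L : K ∩ L]`.
Passing from `K` to `cKc⁻¹` through `cLc⁻¹` and `L` with the submultiplicativity
`[C : A ∩ C] ≤ [B : A ∩ B] · [C : B ∩ C]` of relative indices then bounds
`[K : cKc⁻¹ ∩ K]` by `[L : K ∩ L] · [L : cLc⁻¹ ∩ L] · [K : L ∩ K]`.
Compactness and openness only enter to make every index involved finite.
-/

/-- The conjugate subgroup `gKg⁻¹`. -/
def conjSubgroup {G : Type*} [Group G] (g : G) (K : Subgroup G) : Subgroup G :=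
  Subgroup.map ((MulAut.conj g).toMonoidHom) K

namespace Subgroup

variable {G : Type*} [Group G]

theorem relIndex_le_relIndex_mul_relIndex {H K L : Subgroup G} (hHK : H.relIndex K ≠ 0)
    (hKL : K.relIndex L ≠ 0) : H.relIndex L ≤ H.relIndex K * K.relIndex L :=
  calc H.relIndex L ≤ (H ⊓ K).relIndex L :=
        relIndex_le_of_le_left inf_le_left
          (relIndex_inf_ne_zero (relIndex_ne_zero_trans hHK hKL) hKL)
    _ = H.relIndex (K ⊓ L) * K.relIndex L := (relIndex_inf_mul_relIndex H K L).symm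
    _ ≤ H.relIndex K * K.relIndex L := by
        gcongr
        exact relIndex_le_of_le_right inf_le_left hHK

theorem relIndex_ne_zero_of_isOpen_of_isCompact [TopologicalSpace G] [IsTopologicalGroup G]
    {H K : Subgroup G} (hH : IsOpen (H : Set G)) (hK : IsCompact (K : Set G)) :
    H.relIndex K ≠ 0 :=
  have : CompactSpace K := isCompact_iff_compactSpace.mp hK
  have : Finite (K ⧸ H.subgroupOf K) := quotient_finite_of_isOpen _ (subgroupOf_isOpen K H hH)
  index_ne_zero_of_finite

end Subgroup

section conjSubgroup

open Subgroup

variable {G : Type*} [Group G]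

theorem relIndex_conjSubgroup (c : G) (H K : Subgroup G) :
    (conjSubgroup c H).relIndex (conjSubgroup c K) = H.relIndex K :=
  Subgroup.relIndex_map_map_of_injective H K (MulAut.conj c).injective

theorem isOpen_conjSubgroup [TopologicalSpace G] [ContinuousMul G] (c : G)
    {H : Subgroup G} (hH : IsOpen (H : Set G)) : IsOpen (conjSubgroup c H : Set G) :=
  ((isOpenMap_mul_right c⁻¹).comp (isOpenMap_mul_left c)) _ hH

theorem relIndex_conjSubgroup_le [TopologicalSpace G] [IsTopologicalGroup G] (c : G)
    {K L : Subgroup G} (hLc : IsCompact (L : Set G)) (hLo : IsOpen (L : Set G))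
    (hKc : IsCompact (K : Set G)) (hKo : IsOpen (K : Set G)) :
    (conjSubgroup c K).relIndex K ≤
      (conjSubgroup c L).relIndex L * L.relIndex K * K.relIndex L := by
  have hKL : (conjSubgroup c K).relIndex (conjSubgroup c L) = K.relIndex L :=
    relIndex_conjSubgroup c K L
  have hLK : L.relIndex K ≠ 0 := relIndex_ne_zero_of_isOpen_of_isCompact hLo hKc
  have hL'L : (conjSubgroup c L).relIndex L ≠ 0 :=
    relIndex_ne_zero_of_isOpen_of_isCompact (isOpen_conjSubgroup c hLo) hLc
  calc (conjSubgroup c K).relIndex K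
      ≤ (conjSubgroup c K).relIndex (conjSubgroup c L) * (conjSubgroup c L).relIndex K :=
        relIndex_le_relIndex_mul_relIndex
          (hKL ▸ relIndex_ne_zero_of_isOpen_of_isCompact hKo hLc)
          (relIndex_ne_zero_trans hL'L hLK)
    _ ≤ K.relIndex L * ((conjSubgroup c L).relIndex L * L.relIndex K) := by
        rw [hKL]
        gcongr
        exact relIndex_le_relIndex_mul_relIndex hL'L hLK
    _ = (conjSubgroup c L).relIndex L * L.relIndex K * K.relIndex L := by ring

end conjSubgroup

/-- If for some compact open subgroup `L` the indices `[L : L ∩ gⁿLg⁻ⁿ]` are bounded,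
then they are bounded for every compact open subgroup `K`, with the explicit bound
`[K : K ∩ gⁿKg⁻ⁿ] ≤ [L : L ∩ gⁿLg⁻ⁿ] · [K : K ∩ L] · [L : K ∩ L]`. -/
theorem bounded_conj_indices_independent_of_subgroup
    {G : Type*} [Group G] [TopologicalSpace G] [IsTopologicalGroup G]
    (g : G)
    (L : Subgroup G) (hLc : IsCompact (L : Set G)) (hLo : IsOpen (L : Set G))
    (hbdd : ∃ C : ℕ, ∀ n : ℕ, (conjSubgroup (g ^ n) L).relIndex L ≤ C)
    (K : Subgroup G) (hKc : IsCompact (K : Set G)) (hKo : IsOpen (K : Set G)) :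
    (∀ n : ℕ, (conjSubgroup (g ^ n) K).relIndex K ≤
        (conjSubgroup (g ^ n) L).relIndex L * L.relIndex K * K.relIndex L) ∧
      ∃ C : ℕ, ∀ n : ℕ, (conjSubgroup (g ^ n) K).relIndex K ≤ C := by
  have hbound n := relIndex_conjSubgroup_le (g ^ n) hLc hLo hKc hKo
  obtain ⟨C, hC⟩ := hbdd
  refine ⟨hbound, C * L.relIndex K * K.relIndex L, fun n => (hbound n).trans ?_⟩
  gcongr
  exact hC n
end

section
/- Let H be a Hilbert space, C > 0, n ≥ 1, and for each i ∈ {1,…,n} let xᵢ ∈ B(H) with ‖xᵢ‖ ≤ C and let qᵢ ∈ B(H) be an orthogonal projection such that: (a) qᵢ xᵢ qᵢ = 0 for each i; (b) ((1−qᵢ)xᵢ)* ((1−qⱼ)xⱼ) = 0 for all i ≠ j; (c) (qᵢ xᵢ (1−qᵢ)) (qⱼ xⱼ (1−qⱼ))* = 0 for all i ≠ j. Then ‖(1/n) Σᵢ xᵢ‖ ≤ 2C/√n. -/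
open ContinuousLinearMap in
lemma aux_orth_ranges {H : Type*} [NormedAddCommGroup H] [InnerProductSpace ℂ H]
    [CompleteSpace H] {n : ℕ} (u : Fin n → H →L[ℂ] H) (C : ℝ) (hC : 0 ≤ C)
    (hu : ∀ i, ‖u i‖ ≤ C)
    (h : ∀ i j : Fin n, i ≠ j → star (u i) * u j = 0) :
    ‖∑ i, u i‖ ≤ C * Real.sqrt n := by
  have key : ‖∑ i, u i‖ * ‖∑ i, u i‖ ≤ n * (C * C) := by
    rw [← CStarRing.norm_star_mul_self]
    have : star (∑ i, u i) * ∑ i, u i = ∑ i, star (u i) * u i := by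
      rw [star_sum, Finset.sum_mul_sum]
      refine Finset.sum_congr rfl fun i _ => ?_
      rw [Finset.sum_eq_single i (fun j _ hj => h i j (Ne.symm hj) ▸ rfl) (by simp)]
    rw [this]
    calc ‖∑ i, star (u i) * u i‖ ≤ ∑ i : Fin n, ‖star (u i) * u i‖ :=
          norm_sum_le _ _
      _ ≤ ∑ i : Fin n, C * C := Finset.sum_le_sum fun i _ => by
          rw [CStarRing.norm_star_mul_self]
          exact mul_le_mul (hu i) (hu i) (norm_nonneg _) hC
      _ = n * (C * C) := by simp [mul_comm]
  have hs : (Real.sqrt n) * Real.sqrt n = n := Real.mul_self_sqrt (by positivity)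
  nlinarith [norm_nonneg (∑ i, u i), Real.sqrt_nonneg (n : ℝ),
    mul_nonneg hC (Real.sqrt_nonneg (n : ℝ))]

open ContinuousLinearMap in
lemma aux_orth_supports {H : Type*} [NormedAddCommGroup H] [InnerProductSpace ℂ H]
    [CompleteSpace H] {n : ℕ} (u : Fin n → H →L[ℂ] H) (C : ℝ) (hC : 0 ≤ C)
    (hu : ∀ i, ‖u i‖ ≤ C)
    (h : ∀ i j : Fin n, i ≠ j → u i * star (u j) = 0) :
    ‖∑ i, u i‖ ≤ C * Real.sqrt n := by
  have := aux_orth_ranges (fun i => star (u i)) C hC (fun i => by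
      rw [norm_star]; exact hu i)
    (fun i j hij => by simpa using h i j hij)
  calc ‖∑ i, u i‖ = ‖star (∑ i, star (u i))‖ := by simp
    _ = ‖∑ i, star (u i)‖ := norm_star _
    _ ≤ C * Real.sqrt n := this

/-- Powers averaging estimate: if `‖xᵢ‖ ≤ C`, `qᵢ` are orthogonal projections with
`qᵢ xᵢ qᵢ = 0`, the operators `(1−qᵢ)xᵢ` have pairwise orthogonal ranges, and the
operators `qᵢ xᵢ (1−qᵢ)` have pairwise orthogonal supports, then
`‖(1/n) Σ xᵢ‖ ≤ 2C/√n`. -/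
theorem powers_averaging_estimate
    {H : Type*} [NormedAddCommGroup H] [InnerProductSpace ℂ H] [CompleteSpace H]
    (C : ℝ) (hC : 0 < C) (n : ℕ) (hn : 1 ≤ n)
    (x q : Fin n → H →L[ℂ] H)
    (hx : ∀ i, ‖x i‖ ≤ C)
    (hq : ∀ i, q i * q i = q i ∧ ContinuousLinearMap.adjoint (q i) = q i)
    (ha : ∀ i, q i * x i * q i = 0)
    (hb : ∀ i j : Fin n, i ≠ j →
      ContinuousLinearMap.adjoint ((1 - q i) * x i) * ((1 - q j) * x j) = 0)
    (hc : ∀ i j : Fin n, i ≠ j →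
      (q i * x i * (1 - q i)) * ContinuousLinearMap.adjoint (q j * x j * (1 - q j)) = 0) :
    ‖(n : ℂ)⁻¹ • ∑ i, x i‖ ≤ 2 * C / Real.sqrt n := by
  have hqn : ∀ i, ‖q i‖ ≤ 1 := by
    intro i
    by_cases h0 : q i = 0
    · simp [h0]
    · have hnn : 0 < ‖q i‖ := norm_pos_iff.mpr h0
      have : ‖q i‖ * ‖q i‖ = ‖q i‖ := by
        conv_rhs => rw [← (hq i).1]
        rw [← CStarRing.norm_star_mul_self, ContinuousLinearMap.star_eq_adjoint, (hq i).2]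
      nlinarith
  have hq1n : ∀ i, ‖(1 : H →L[ℂ] H) - q i‖ ≤ 1 := by
    intro i
    by_cases h0 : (1 : H →L[ℂ] H) - q i = 0
    · simp [h0]
    · have hnn : 0 < ‖(1 : H →L[ℂ] H) - q i‖ := norm_pos_iff.mpr h0
      have hsa : star ((1 : H →L[ℂ] H) - q i) = 1 - q i := by
        simp [star_sub, ContinuousLinearMap.star_eq_adjoint, (hq i).2]
      have hid : ((1 : H →L[ℂ] H) - q i) * (1 - q i) = 1 - q i := by
        rw [mul_one_sub, one_sub_mul, (hq i).1]
        simp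
      have : ‖(1 : H →L[ℂ] H) - q i‖ * ‖(1 : H →L[ℂ] H) - q i‖ = ‖(1 : H →L[ℂ] H) - q i‖ := by
        conv_rhs => rw [← hid]
        rw [← CStarRing.norm_star_mul_self, hsa]
      nlinarith
  set u : Fin n → H →L[ℂ] H := fun i => (1 - q i) * x i with hu
  set v : Fin n → H →L[ℂ] H := fun i => q i * x i * (1 - q i) with hv
  have hun : ∀ i, ‖u i‖ ≤ C := fun i =>
    calc ‖(1 - q i) * x i‖ ≤ ‖(1 : H →L[ℂ] H) - q i‖ * ‖x i‖ := norm_mul_le _ _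
      _ ≤ 1 * C := mul_le_mul (hq1n i) (hx i) (norm_nonneg _) zero_le_one
      _ = C := one_mul C
  have hvn : ∀ i, ‖v i‖ ≤ C := fun i =>
    calc ‖q i * x i * (1 - q i)‖ ≤ ‖q i * x i‖ * ‖(1 : H →L[ℂ] H) - q i‖ := norm_mul_le _ _
      _ ≤ ‖q i‖ * ‖x i‖ * 1 := by
          refine mul_le_mul (norm_mul_le _ _) (hq1n i) (norm_nonneg _) ?_
          positivity
      _ ≤ 1 * C * 1 := by
          refine mul_le_mul_of_nonneg_right ?_ zero_le_one
          exact mul_le_mul (hqn i) (hx i) (norm_nonneg _) zero_le_one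
      _ = C := by ring
  have hsum : ∑ i, x i = (∑ i, u i) + ∑ i, v i := by
    rw [← Finset.sum_add_distrib]
    refine Finset.sum_congr rfl fun i _ => ?_
    have h2 : u i + v i = x i - q i * x i * q i := by
      simp only [hu, hv]; noncomm_ring
    rw [h2, ha i, sub_zero]
  have hU : ‖∑ i, u i‖ ≤ C * Real.sqrt n :=
    aux_orth_ranges u C hC.le hun fun i j hij => by
      simpa [ContinuousLinearMap.star_eq_adjoint] using hb i j hij
  have hV : ‖∑ i, v i‖ ≤ C * Real.sqrt n :=
    aux_orth_supports v C hC.le hvn fun i j hij => by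
      simpa [ContinuousLinearMap.star_eq_adjoint] using hc i j hij
  have hnpos : (0:ℝ) < n := by exact_mod_cast hn
  have hsq : (0:ℝ) < Real.sqrt n := Real.sqrt_pos.mpr hnpos
  rw [norm_smul, hsum]
  have h1 : ‖(↑n : ℂ)⁻¹‖ = (n : ℝ)⁻¹ := by
    simp
  rw [h1]
  calc (n:ℝ)⁻¹ * ‖(∑ i, u i) + ∑ i, v i‖
      ≤ (n:ℝ)⁻¹ * (C * Real.sqrt n + C * Real.sqrt n) := by
        refine mul_le_mul_of_nonneg_left ?_ (by positivity)
        exact (norm_add_le _ _).trans (add_le_add hU hV)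
    _ = 2 * C / Real.sqrt n := by
        rw [eq_div_iff hsq.ne']
        field_simp
        nlinarith [Real.mul_self_sqrt hnpos.le]
end

section
/- Let G be a locally compact group with left Haar measure μ, K ≤ G a compact open subgroup, and g ∈ G. Set L = K ∩ gKg⁻¹. Then p_K λ(g) p_K = (1/[K:L]) Σ_{kL ∈ K/L} λ(kg) p_K as operators on L²(G, μ). -/
open MeasureTheory

/-- The averaging operator over a compact open subgroup `H`:
`(p_H ξ)(g) = (1/μ(H)) ∫_H ξ(kg) dμ(k)`. -/
noncomputable def avgProj {G : Type*} [Group G] [MeasurableSpace G]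
    (μ : Measure G) (H : Subgroup G) (ξ : G → ℂ) : G → ℂ :=
  fun g => ((μ (H : Set G)).toReal)⁻¹ • ∫ k in (H : Set G), ξ (k * g) ∂μ

/-- The left regular representation: `(λ(g)ξ)(h) = ξ(g⁻¹h)`. -/
def lreg {G : Type*} [Group G] (g : G) (ξ : G → ℂ) : G → ℂ :=
  fun h => ξ (g⁻¹ * h)

/-!
Since `p_K ξ` is left `K`-invariant, `λ(g) p_K ξ` is left invariant under `gKg⁻¹`, so the integrand
`k ↦ (p_K ξ)(g⁻¹kh)` in `(p_K λ(g) p_K ξ)(h)` is constant on the right cosets `Lt⁻¹` of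
`L = K ∩ gKg⁻¹`. These cosets partition `K`, and each has Haar measure `μ(L)` because the modular
character is trivial on the compact open subgroup `K`. Hence the integral is
`μ(L) Σₜ (p_K ξ)(g⁻¹t⁻¹h)`, and `μ(K) = [K:L] μ(L)`.
-/

open Measure

section Group

variable {G : Type*} [Group G]

lemma mem_conjSubgroup_iff {g x : G} {K : Subgroup G} :
    x ∈ conjSubgroup g K ↔ g⁻¹ * x * g ∈ K := by
  constructor
  · rintro ⟨k, hk, rfl⟩
    simpa [mul_assoc] using hk
  · intro hx
    exact ⟨g⁻¹ * x * g, hx, by simp [mul_assoc]⟩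

lemma lreg_mul (a b : G) (ξ : G → ℂ) : lreg (a * b) ξ = lreg a (lreg b ξ) := by
  ext h
  simp [lreg, mul_assoc]

lemma lreg_mul_left_of_mem_conjSubgroup {K : Subgroup G} {η : G → ℂ}
    (hη : ∀ m ∈ K, ∀ y, η (m * y) = η y) {g l : G} (hl : l ∈ conjSubgroup g K) (x : G) :
    lreg g η (l * x) = lreg g η x := by
  have hgl : g⁻¹ * (l * x) = g⁻¹ * l * g * (g⁻¹ * x) := by group
  simp only [lreg, hgl, hη _ (mem_conjSubgroup_iff.1 hl)]

lemma card_eq_relIndex_of_existsUnique {L K : Subgroup G} {T : Finset G}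
    (hTK : (T : Set G) ⊆ K) (hreps : ∀ k ∈ K, ∃! t, t ∈ T ∧ t⁻¹ * k ∈ L) :
    T.card = L.relIndex K := by
  let toQuot : T → K ⧸ L.subgroupOf K := fun t => (⟨t, hTK t.2⟩ : K)
  have hbij : Function.Bijective toQuot := by
    constructor
    · intro t₁ t₂ h
      have h' : (t₁ : G)⁻¹ * t₂ ∈ L := by
        simpa [toQuot, QuotientGroup.eq, Subgroup.mem_subgroupOf] using h
      obtain ⟨t₀, -, huniq⟩ := hreps t₂ (hTK t₂.2)
      exact Subtype.ext ((huniq _ ⟨t₁.2, h'⟩).trans (huniq _ ⟨t₂.2, by simp⟩).symm)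
    · intro q
      induction q using QuotientGroup.induction_on with
      | H k =>
        obtain ⟨t, ⟨htT, htk⟩, -⟩ := hreps k k.2
        exact ⟨⟨t, htT⟩, by rwa [QuotientGroup.eq, Subgroup.mem_subgroupOf]⟩
  rw [Subgroup.relIndex, Subgroup.index, ← Nat.card_eq_of_bijective _ hbij,
    Nat.card_eq_finsetCard]

lemma preimage_mul_right_subgroup {K : Subgroup G} {m : G} (hm : m ∈ K) :
    (· * m) ⁻¹' (K : Set G) = K := by
  ext x
  exact K.mul_mem_cancel_right hm

lemma mem_preimage_mul_right_iff {L : Subgroup G} {t k : G} :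
    k ∈ (· * t) ⁻¹' (L : Set G) ↔ t⁻¹ * k⁻¹ ∈ L := by
  rw [← mul_inv_rev, inv_mem_iff]
  rfl

lemma existsUnique_mem_preimage_mul_right {K L : Subgroup G} {T : Finset G}
    (hreps : ∀ k ∈ K, ∃! t, t ∈ T ∧ t⁻¹ * k ∈ L)
    {k : G} (hk : k ∈ K) : ∃! t, t ∈ T ∧ k ∈ (· * t) ⁻¹' (L : Set G) := by
  simpa only [mem_preimage_mul_right_iff] using hreps k⁻¹ (inv_mem hk)

lemma preimage_mul_right_subset {K L : Subgroup G} (hLK : L ≤ K) {t : G} (ht : t ∈ K) :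
    (· * t) ⁻¹' (L : Set G) ⊆ K := fun _ hk => (K.mul_mem_cancel_right ht).1 (hLK hk)

end Group

section Topology

variable {G : Type*} [Group G] [TopologicalSpace G] [IsTopologicalGroup G]

lemma isOpen_conjSubgroup_s17 (g : G) {K : Subgroup G} (hKo : IsOpen (K : Set G)) :
    IsOpen (conjSubgroup g K : Set G) := by
  have : (conjSubgroup g K : Set G) = (fun x => g⁻¹ * x * g) ⁻¹' K := by
    ext x; exact mem_conjSubgroup_iff
  rw [this]
  exact hKo.preimage (by fun_prop)

end Topology

section Haar

variable {G : Type*} [Group G] [TopologicalSpace G] [IsTopologicalGroup G]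
  [LocallyCompactSpace G] [MeasurableSpace G] [BorelSpace G]
  (μ : Measure G) [μ.IsHaarMeasure] {K L : Subgroup G} {T : Finset G}

lemma haarScalarFactor_map_mul_right_eq_one (hKc : IsCompact (K : Set G))
    (hKo : IsOpen (K : Set G)) {m : G} (hm : m ∈ K) :
    haarScalarFactor (map (· * m) μ) μ = 1 := by
  have hKcl : IsClosed (K : Set G) := K.isClosed_of_isOpen hKo
  have h := measure_isMulInvariant_eq_smul_of_isCompact_closure (map (· * m) μ) μ
    (hKcl.closure_eq ▸ hKc)
  rw [map_apply (measurable_mul_const m) hKcl.measurableSet,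
    preimage_mul_right_subgroup hm, ENNReal.smul_def, smul_eq_mul] at h
  have hpos : μ (K : Set G) ≠ 0 := (hKo.measure_pos μ ⟨1, K.one_mem⟩).ne'
  exact_mod_cast ((ENNReal.mul_eq_right hpos hKc.measure_lt_top.ne).1 h.symm)

lemma map_mul_right_restrict_subgroup (hKc : IsCompact (K : Set G))
    (hKo : IsOpen (K : Set G)) {m : G} (hm : m ∈ K) :
    map (· * m) (μ.restrict K) = μ.restrict K := by
  have hKcl : IsClosed (K : Set G) := K.isClosed_of_isOpen hKo
  ext s hs
  have hcl : IsCompact (closure (s ∩ K)) :=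
    hKc.of_isClosed_subset isClosed_closure (closure_minimal Set.inter_subset_right hKcl)
  have h := measure_isMulInvariant_eq_smul_of_isCompact_closure (map (· * m) μ) μ hcl
  rw [haarScalarFactor_map_mul_right_eq_one μ hKc hKo hm, one_smul,
    map_apply (measurable_mul_const m) (hs.inter hKcl.measurableSet), Set.preimage_inter,
    preimage_mul_right_subgroup hm] at h
  rw [map_apply (measurable_mul_const m) hs, restrict_apply (measurable_mul_const m hs),
    restrict_apply hs, h]

lemma measure_preimage_mul_right_subgroup (hKc : IsCompact (K : Set G))
    (hKo : IsOpen (K : Set G)) {m : G} (hm : m ∈ K) {s : Set G} (hs : MeasurableSet s)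
    (hsK : s ⊆ K) :
    μ ((· * m) ⁻¹' s) = μ s := by
  have h := congrArg (fun ν : Measure G => ν s) (map_mul_right_restrict_subgroup μ hKc hKo hm)
  rwa [map_apply (measurable_mul_const m) hs, restrict_apply (measurable_mul_const m hs),
    Set.inter_eq_left.2 ((Set.preimage_mono hsK).trans (preimage_mul_right_subgroup hm).subset),
    restrict_apply hs, Set.inter_eq_left.2 hsK] at h

lemma setIntegral_mul_right_subgroup {E : Type*} [NormedAddCommGroup E] [NormedSpace ℝ E]
    (hKc : IsCompact (K : Set G)) (hKo : IsOpen (K : Set G)) {m : G} (hm : m ∈ K)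
    (f : G → E) :
    ∫ k in K, f (k * m) ∂μ = ∫ k in K, f k ∂μ := by
  rw [← (measurableEmbedding_mulRight m).integral_map,
    map_mul_right_restrict_subgroup μ hKc hKo hm]

lemma avgProj_mul_left_of_mem (hKc : IsCompact (K : Set G)) (hKo : IsOpen (K : Set G))
    (ξ : G → ℂ) {m : G} (hm : m ∈ K) (y : G) :
    avgProj μ K ξ (m * y) = avgProj μ K ξ y := by
  simp only [avgProj, ← mul_assoc]
  rw [setIntegral_mul_right_subgroup μ hKc hKo hm (fun k => ξ (k * y))]

lemma setIntegral_eq_sum_cosets {E : Type*} [NormedAddCommGroup E] [NormedSpace ℝ E]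
    [CompleteSpace E] (hKc : IsCompact (K : Set G)) (hKo : IsOpen (K : Set G)) (hLK : L ≤ K)
    (hLo : IsOpen (L : Set G)) (hTK : (T : Set G) ⊆ K)
    (hreps : ∀ k ∈ K, ∃! t, t ∈ T ∧ t⁻¹ * k ∈ L) (f : G → E)
    (hf : ∀ l ∈ L, ∀ x, f (l * x) = f x) :
    ∫ k in K, f k ∂μ = μ.real L • ∑ t ∈ T, f t⁻¹ := by
  set S : G → Set G := fun t => (· * t) ⁻¹' (L : Set G)
  have hLm : MeasurableSet (L : Set G) := (L.isClosed_of_isOpen hLo).measurableSet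
  have hSm : ∀ t, MeasurableSet (S t) := fun t => measurable_mul_const t hLm
  have hcover : (K : Set G) = ⋃ t ∈ T, S t := by
    refine subset_antisymm (fun k hk => ?_) (Set.iUnion₂_subset fun t ht =>
      preimage_mul_right_subset hLK (hTK ht))
    obtain ⟨t, ⟨htT, hkt⟩, -⟩ := existsUnique_mem_preimage_mul_right hreps hk
    exact Set.mem_biUnion htT hkt
  have hdisj : (T : Set G).PairwiseDisjoint S := by
    refine fun t₁ ht₁ t₂ ht₂ hne => Set.disjoint_left.2 fun k hk₁ hk₂ => hne ?_
    obtain ⟨t, -, huniq⟩ := existsUnique_mem_preimage_mul_right hreps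
      (preimage_mul_right_subset hLK (hTK ht₁) hk₁)
    exact (huniq t₁ ⟨ht₁, hk₁⟩).trans (huniq t₂ ⟨ht₂, hk₂⟩).symm
  have hconst : ∀ t, Set.EqOn f (fun _ => f t⁻¹) (S t) := fun t k hk => by
    simpa using hf _ hk t⁻¹
  have hμS : ∀ t ∈ T, μ.real (S t) = μ.real L := fun t ht => by
    rw [measureReal_def, measure_preimage_mul_right_subgroup μ hKc hKo (hTK ht) hLm hLK,
      measureReal_def]
  have hfin : ∀ t ∈ T, μ (S t) ≠ ⊤ := fun t ht =>
    (measure_mono (preimage_mul_right_subset hLK (hTK ht))).trans_lt hKc.measure_lt_top |>.ne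
  calc ∫ k in K, f k ∂μ = ∑ t ∈ T, ∫ k in S t, f k ∂μ := by
        rw [hcover]
        exact integral_biUnion_finset T (fun t _ => hSm t) hdisj fun t ht =>
          (integrableOn_const (hfin t ht)).congr_fun (hconst t).symm (hSm t)
    _ = ∑ t ∈ T, μ.real L • f t⁻¹ := Finset.sum_congr rfl fun t ht => by
        rw [setIntegral_congr_fun (hSm t) (hconst t), setIntegral_const, hμS t ht]
    _ = μ.real L • ∑ t ∈ T, f t⁻¹ := Finset.smul_sum.symm

lemma measureReal_subgroup_eq_relIndex_mul (hKc : IsCompact (K : Set G))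
    (hKo : IsOpen (K : Set G)) (hLK : L ≤ K) (hLo : IsOpen (L : Set G))
    (hTK : (T : Set G) ⊆ K) (hreps : ∀ k ∈ K, ∃! t, t ∈ T ∧ t⁻¹ * k ∈ L) :
    μ.real K = L.relIndex K * μ.real L := by
  have h := setIntegral_eq_sum_cosets μ hKc hKo hLK hLo hTK hreps (fun _ => (1 : ℝ))
    fun _ _ _ => rfl
  rw [setIntegral_const, Finset.sum_const] at h
  rw [← card_eq_relIndex_of_existsUnique hTK hreps]
  simpa [mul_comm] using h

end Haar

theorem avgProj_lreg_avgProj_general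
    {G : Type*} [Group G] [TopologicalSpace G] [IsTopologicalGroup G]
    [LocallyCompactSpace G] [MeasurableSpace G] [BorelSpace G]
    (μ : Measure G) [μ.IsHaarMeasure]
    (K : Subgroup G) (hKc : IsCompact (K : Set G)) (hKo : IsOpen (K : Set G))
    (g : G)
    (T : Finset G) (hTK : (T : Set G) ⊆ K)
    (hreps : ∀ k ∈ K, ∃! t, t ∈ T ∧ t⁻¹ * k ∈ (K ⊓ conjSubgroup g K : Subgroup G))
    (ξ : G → ℂ) :
    avgProj μ K (lreg g (avgProj μ K ξ)) =ᵐ[μ]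
      fun h => (((K ⊓ conjSubgroup g K : Subgroup G).relIndex K : ℝ))⁻¹ •
        ∑ t ∈ T, lreg (t * g) (avgProj μ K ξ) h := by
  set L := K ⊓ conjSubgroup g K
  set η := avgProj μ K ξ
  have hLK : L ≤ K := inf_le_left
  have hLo : IsOpen (L : Set G) := hKo.inter (isOpen_conjSubgroup_s17 g hKo)
  have hL : μ.real L ≠ 0 := ENNReal.toReal_ne_zero.2
    ⟨(hLo.measure_pos μ ⟨1, L.one_mem⟩).ne', ((measure_mono hLK).trans_lt hKc.measure_lt_top).ne⟩
  have hη : ∀ m ∈ K, ∀ y, η (m * y) = η y := fun _ hm => avgProj_mul_left_of_mem μ hKc hKo ξ hm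
  refine Filter.Eventually.of_forall fun h => ?_
  have hcosets := setIntegral_eq_sum_cosets μ hKc hKo hLK hLo hTK hreps
    (fun k => lreg g η (k * h)) fun l hl x => by
      simpa only [mul_assoc] using lreg_mul_left_of_mem_conjSubgroup hη hl.2 (x * h)
  change (μ.real K)⁻¹ • ∫ k in K, lreg g η (k * h) ∂μ = _
  have hscale : (μ.real K)⁻¹ * μ.real L = ((L.relIndex K : ℝ))⁻¹ := by
    rw [measureReal_subgroup_eq_relIndex_mul μ hKc hKo hLK hLo hTK hreps]
    field_simp
  rw [hcosets, smul_smul, hscale]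
  simp only [lreg_mul]
  rfl

/-- With `L = K ∩ gKg⁻¹`, one has
`p_K λ(g) p_K = (1/[K:L]) Σ_{kL ∈ K/L} λ(kg) p_K` as operators on `L²(G)`. -/
theorem avgProj_lreg_avgProj
    {G : Type*} [Group G] [TopologicalSpace G] [IsTopologicalGroup G]
    [LocallyCompactSpace G] [MeasurableSpace G] [BorelSpace G]
    (μ : Measure G) [μ.IsHaarMeasure]
    (K : Subgroup G) (hKc : IsCompact (K : Set G)) (hKo : IsOpen (K : Set G))
    (g : G)
    (T : Finset G) (hTK : (T : Set G) ⊆ K)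
    (hreps : ∀ k ∈ K, ∃! t, t ∈ T ∧ t⁻¹ * k ∈ (K ⊓ conjSubgroup g K : Subgroup G))
    (ξ : G → ℂ) (hξ : MemLp ξ 2 μ) :
    avgProj μ K (lreg g (avgProj μ K ξ)) =ᵐ[μ]
      fun h => (((K ⊓ conjSubgroup g K : Subgroup G).relIndex K : ℝ))⁻¹ •
        ∑ t ∈ T, lreg (t * g) (avgProj μ K ξ) h :=
  avgProj_lreg_avgProj_general μ K hKc hKo g T hTK hreps ξ
end
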